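/- arXiv:1810.11441 — 4 statements merged into one kernel-verified Lean document; each statement's English description precedes it below -/
import Mathlib

section
/- Let n ≥ 1 and k be natural numbers with k < n, let f : ℕ → Finset (Fin n) satisfy (f t).card ≤ k for every t : ℕ, and let ρ be a real number with ρ > k/n. Then for every real C there exist t : ℕ and a station v : Fin n such that ρ·t − |{r ∈ Finset.range t | v ∈ f r}| ≥ C. (This is the quantitative content of the theorem that no k-energy-oblivious routing algorithm is stable against adversaries with injection rate greater than k/n: the adversary can inject at least ρ·t packets into v during the first t rounds, while v can deliver at most one packet per round in which it is switched on, so its queue exceeds C.) -/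
/-- No `k`-energy-oblivious routing algorithm is stable against adversaries of
injection rate `ρ > k/n`: for every bound `C` there are a round `t` and a station `v`
such that `ρ·t` minus the number of rounds before `t` in which `v` is on exceeds `C`. -/
theorem oblivious_unstable_above_k_div_n (n k : ℕ) (hn : 1 ≤ n) (hk : k < n)
    (f : ℕ → Finset (Fin n)) (hf : ∀ t : ℕ, (f t).card ≤ k)
    (ρ : ℝ) (hρ : ρ > (k : ℝ) / (n : ℝ)) :
    ∀ C : ℝ, ∃ (t : ℕ) (v : Fin n),
      ρ * t - ((Finset.range t).filter (fun r => v ∈ f r)).card ≥ C := by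
  intro C
  have hn0 : (0 : ℝ) < n := by exact_mod_cast hn
  set ε : ℝ := ρ - (k : ℝ) / n with hε
  have hεpos : 0 < ε := by simp [hε]; linarith
  set t : ℕ := ⌈C / ε⌉₊ with ht
  have htC : C ≤ t * ε := by
    have h1 : C / ε ≤ (t : ℝ) := Nat.le_ceil _
    calc C = (C / ε) * ε := by field_simp
    _ ≤ t * ε := by nlinarith
  -- averaging
  haveI : NeZero n := ⟨by omega⟩
  obtain ⟨v, -, hv⟩ := Finset.exists_min_image (Finset.univ : Finset (Fin n))
    (fun v => ((Finset.range t).filter (fun r => v ∈ f r)).card) ⟨⟨0, hn⟩, Finset.mem_univ _⟩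
  refine ⟨t, v, ?_⟩
  set cnt := fun v : Fin n => ((Finset.range t).filter (fun r => v ∈ f r)).card with hcnt
  have hswap : ∑ w : Fin n, cnt w = ∑ r ∈ Finset.range t, (f r).card := by
    simp only [hcnt, Finset.card_filter]
    rw [Finset.sum_comm]
    congr 1
    ext r
    rw [← Finset.card_filter]
    congr 1
    simp [Finset.filter_mem_eq_inter]
  have hsum_le : ∑ w : Fin n, cnt w ≤ k * t := by
    rw [hswap]
    calc ∑ r ∈ Finset.range t, (f r).card ≤ ∑ _r ∈ Finset.range t, k :=
          Finset.sum_le_sum (fun r _ => hf r)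
      _ = k * t := by simp [Nat.mul_comm]
  have hmin : n * cnt v ≤ k * t := by
    calc n * cnt v = ∑ _w : Fin n, cnt v := by simp [Nat.mul_comm]
      _ ≤ ∑ w : Fin n, cnt w := Finset.sum_le_sum (fun w _ => hv w (Finset.mem_univ w))
      _ ≤ k * t := hsum_le
  have hminR : (cnt v : ℝ) ≤ (k : ℝ) * t / n := by
    rw [le_div_iff₀ hn0]
    have h : (n : ℝ) * cnt v ≤ (k : ℝ) * t := by exact_mod_cast hmin
    nlinarith
  have : ρ * t - (cnt v : ℝ) ≥ t * ε := by
    have : (k : ℝ) * t / n = ((k : ℝ) / n) * t := by ring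
    simp only [hε]
    nlinarith
  linarith
end

section
/- Let c be a real number with 0 < c < 1, let n ≥ 1 and k be natural numbers with k ≤ c·n, and let f : ℕ → Finset (Fin n) satisfy (f t).card ≤ k for every t : ℕ. Then for every real ρ with c < ρ ≤ 1 and every real C there exist t : ℕ and a station v : Fin n such that ρ·t − |{r ∈ Finset.range t | v ∈ f r}| ≥ C. (This is the content of the corollary that there is no k-energy-oblivious universal routing algorithm when k = c·n for a constant c < 1: for every such schedule there is an injection rate less than 1 against which queues grow unboundedly.) -/
/-- There is no `k`-energy-oblivious universal routing algorithm when `k ≤ c·n` for a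
constant `c < 1`: for every injection rate `ρ` with `c < ρ ≤ 1` and every bound `C`,
queues can be made to exceed `C`. -/
theorem no_oblivious_universal_linear_cap (c : ℝ) (hc0 : 0 < c) (hc1 : c < 1)
    (n k : ℕ) (hn : 1 ≤ n) (hk : (k : ℝ) ≤ c * n)
    (f : ℕ → Finset (Fin n)) (hf : ∀ t : ℕ, (f t).card ≤ k) :
    ∀ ρ : ℝ, c < ρ → ρ ≤ 1 → ∀ C : ℝ, ∃ (t : ℕ) (v : Fin n),
      ρ * t - ((Finset.range t).filter (fun r => v ∈ f r)).card ≥ C := by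
  intro ρ hcρ hρ1 C
  have hpos : 0 < ρ - c := by linarith
  obtain ⟨t, ht⟩ := exists_nat_ge (C / (ρ - c))
  refine ⟨t, ?_⟩
  -- sum of counts over v equals sum of cards over r
  have hsum : ∑ v : Fin n, (((Finset.range t).filter (fun r => v ∈ f r)).card : ℝ)
      = ∑ r ∈ Finset.range t, ((f r).card : ℝ) := by
    have : ∀ v : Fin n, (((Finset.range t).filter (fun r => v ∈ f r)).card : ℝ)
        = ∑ r ∈ Finset.range t, (if v ∈ f r then (1:ℝ) else 0) := by
      intro v
      rw [Finset.card_filter]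
      push_cast
      rfl
    simp_rw [this]
    rw [Finset.sum_comm]
    congr 1
    ext r
    rw [Finset.sum_ite_mem, Finset.univ_inter, Finset.sum_const, nsmul_eq_mul, mul_one]
  have hbound : ∑ v : Fin n, (((Finset.range t).filter (fun r => v ∈ f r)).card : ℝ)
      ≤ ∑ _v : Fin n, c * t := by
    rw [hsum, Finset.sum_const, Finset.card_univ, Fintype.card_fin, nsmul_eq_mul]
    calc ∑ r ∈ Finset.range t, ((f r).card : ℝ)
        ≤ ∑ _r ∈ Finset.range t, (k : ℝ) := by
          apply Finset.sum_le_sum; intro r _; exact_mod_cast hf r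
      _ = t * k := by simp [mul_comm]
      _ ≤ t * (c * n) := by
          apply mul_le_mul_of_nonneg_left hk (by positivity)
      _ = n * (c * t) := by ring
  haveI : NeZero n := ⟨by omega⟩
  obtain ⟨v, _, hv⟩ := Finset.exists_le_of_sum_le (Finset.univ_nonempty) hbound
  refine ⟨v, ?_⟩
  have : (ρ - c) * t ≥ C := by
    rw [div_le_iff₀ hpos] at ht
    linarith [ht]
  have h2 : ρ * t - (((Finset.range t).filter (fun r => v ∈ f r)).card : ℝ)
      ≥ ρ * t - c * t := by linarith
  calc ρ * t - (((Finset.range t).filter (fun r => v ∈ f r)).card : ℝ)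
      ≥ ρ * t - c * t := h2
    _ = (ρ - c) * t := by ring
    _ ≥ C := this
end

section
/- Let n ≥ 2 and k ≤ n be natural numbers, let f : ℕ → Finset (Fin n) satisfy (f t).card ≤ k for every t : ℕ, and let ρ be a real number with ρ > k·(k−1)/(n·(n−1)). Then for every real C there exist t : ℕ and stations w, z : Fin n with w ≠ z such that ρ·t − |{r ∈ Finset.range t | w ∈ f r ∧ z ∈ f r}| ≥ C. (This is the quantitative content of the theorem that no k-energy-oblivious algorithm routing directly is stable against adversaries with injection rate greater than k(k−1)/(n(n−1)): the adversary injects at least ρ·t packets into w all destined for z, and a direct-routing algorithm can deliver such a packet only in a round in which both w and z are switched on, at most one per round, so w's queue exceeds C.) -/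
/-! Summing, over all ordered pairs of distinct stations, the number of rounds in which both are
switched on counts every round `r` exactly `|f r| (|f r| - 1) ≤ k (k - 1)` times. Averaging over the
`n (n - 1)` pairs, some pair `w ≠ z` shares at most `t k (k - 1) / (n (n - 1)) < ρ t` of the first
`t` rounds, so the backlog `ρ t - #{shared rounds}` of packets injected into `w` for `z` grows at
least linearly in `t`. -/

open Finset

section PairCounting

variable {α : Type*}

theorem sum_card_filter_mem_mem_offDiag [Fintype α] [DecidableEq α] (g : ℕ → Finset α)
    (R : Finset ℕ) :
    ∑ p ∈ (univ : Finset α).offDiag, #{r ∈ R | p.1 ∈ g r ∧ p.2 ∈ g r} =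
      ∑ r ∈ R, #(g r).offDiag := by
  simp only [card_filter]
  rw [sum_comm]
  refine sum_congr rfl fun r _ => ?_
  rw [← card_filter]
  congr 1
  ext p
  simp only [mem_filter, mem_offDiag, mem_univ, true_and]
  tauto

theorem cast_card_offDiag_le {s : Finset α} {k : ℕ} (hs : #s ≤ k) :
    (#s.offDiag : ℝ) ≤ k * (k - 1) := by
  rw [offDiag_card, Nat.cast_sub (Nat.le_mul_self _), Nat.cast_mul]
  have hsk : (#s : ℝ) ≤ k := by exact_mod_cast hs
  rcases Nat.eq_zero_or_pos k with rfl | hk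
  · simp_all
  · have hk1 : (1 : ℝ) ≤ k := by exact_mod_cast hk
    nlinarith [(#s).cast_nonneg (α := ℝ)]

theorem cast_card_univ_offDiag [Fintype α] [DecidableEq α] :
    (#(univ : Finset α).offDiag : ℝ) = Fintype.card α * (Fintype.card α - 1) := by
  rw [offDiag_card, card_univ, Nat.cast_sub (Nat.le_mul_self _)]
  push_cast
  ring

theorem exists_ne_card_filter_mem_mem_le [Fintype α] [DecidableEq α] [Nontrivial α]
    (g : ℕ → Finset α) {k : ℕ} (hg : ∀ r, #(g r) ≤ k) (R : Finset ℕ) :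
    ∃ w z : α, w ≠ z ∧ (#{r ∈ R | w ∈ g r ∧ z ∈ g r} : ℝ) ≤
      #R * (k * (k - 1) / (Fintype.card α * (Fintype.card α - 1))) := by
  set S := (univ : Finset α).offDiag
  have hcard : (#S : ℝ) = Fintype.card α * (Fintype.card α - 1) := cast_card_univ_offDiag
  have hS : (0 : ℝ) < #S := by
    obtain ⟨w, z, hwz⟩ := exists_pair_ne α
    exact_mod_cast card_pos.2 ⟨(w, z), by simp [S, hwz]⟩
  have hsum : ∑ p ∈ S, (#{r ∈ R | p.1 ∈ g r ∧ p.2 ∈ g r} : ℝ) ≤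
      ∑ _p ∈ S, (#R * (k * (k - 1) / #S) : ℝ) := by
    calc ∑ p ∈ S, (#{r ∈ R | p.1 ∈ g r ∧ p.2 ∈ g r} : ℝ)
        = ∑ r ∈ R, (#(g r).offDiag : ℝ) := by
          exact_mod_cast sum_card_filter_mem_mem_offDiag g R
      _ ≤ ∑ _r ∈ R, (k * (k - 1) : ℝ) := sum_le_sum fun r _ => cast_card_offDiag_le (hg r)
      _ = ∑ _p ∈ S, (#R * (k * (k - 1) / #S) : ℝ) := by
          simp only [sum_const, nsmul_eq_mul]
          field_simp
  obtain ⟨⟨w, z⟩, hp, hle⟩ := exists_le_of_sum_le (card_pos.1 (by exact_mod_cast hS)) hsum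
  exact ⟨w, z, (mem_offDiag.1 hp).2.2, hcard ▸ hle⟩

end PairCounting

theorem oblivious_direct_unstable_general (n k : ℕ) (hn : 2 ≤ n)
    (f : ℕ → Finset (Fin n)) (hf : ∀ t : ℕ, (f t).card ≤ k)
    (ρ : ℝ)
    (hρ : ρ > (k : ℝ) * ((k : ℝ) - 1) / ((n : ℝ) * ((n : ℝ) - 1))) :
    ∀ C : ℝ, ∃ (t : ℕ) (w z : Fin n), w ≠ z ∧
      ρ * t - ((Finset.range t).filter (fun r => w ∈ f r ∧ z ∈ f r)).card ≥ C := by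
  intro C
  set q : ℝ := k * (k - 1) / (n * (n - 1))
  obtain ⟨t, ht⟩ := exists_nat_ge (C / (ρ - q))
  have hCt : C ≤ t * (ρ - q) := (div_le_iff₀ (sub_pos.2 hρ)).1 ht
  have : Nontrivial (Fin n) := Fin.nontrivial_iff_two_le.2 hn
  obtain ⟨w, z, hwz, hshared⟩ := exists_ne_card_filter_mem_mem_le f hf (range t)
  rw [card_range, Fintype.card_fin] at hshared
  exact ⟨t, w, z, hwz, by linarith⟩

/-- No `k`-energy-oblivious direct-routing algorithm is stable against adversaries of
injection rate `ρ > k(k−1)/(n(n−1))`. -/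
theorem oblivious_direct_unstable (n k : ℕ) (hn : 2 ≤ n) (hk : k ≤ n)
    (f : ℕ → Finset (Fin n)) (hf : ∀ t : ℕ, (f t).card ≤ k)
    (ρ : ℝ)
    (hρ : ρ > (k : ℝ) * ((k : ℝ) - 1) / ((n : ℝ) * ((n : ℝ) - 1))) :
    ∀ C : ℝ, ∃ (t : ℕ) (w z : Fin n), w ≠ z ∧
      ρ * t - ((Finset.range t).filter (fun r => w ∈ f r ∧ z ∈ f r)).card ≥ C :=
  oblivious_direct_unstable_general n k hn f hf ρ hρ
end

section
/- Define lg x := ⌈log₂(x+1)⌉ (the ceiling taken as a natural number). For all real numbers ρ and β with 0 ≤ ρ < 1 and β ≥ 0, there exists a natural number N such that for every natural number n ≥ N, setting L := (9·n³·(lg n)² + β)/(1−ρ) (a real number), the inequality L − 9·n³·(lg L) ≥ ρ·L + β holds. -/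
/-- `lg x = ⌈log₂(x+1)⌉` as a natural number. -/
noncomputable def lg (x : ℝ) : ℕ := ⌈Real.logb 2 (x + 1)⌉₊

/-!
Since `(1 - ρ) L = 9 n³ (lg n)² + β`, the inequality `L - 9 n³ lg L ≥ ρ L + β` is equivalent to
`lg L ≤ (lg n)²`. With `k = lg n` we have `n < 2 ^ k`, so `L` is at most `2 ^ (5k + O(1))`,
where the constant depends only on `ρ` and `β`; hence `lg L ≤ 5k + O(1) ≤ k²` once `k` is large.
-/

theorem lg_le_iff {x : ℝ} {k : ℕ} (hx : -1 < x) : lg x ≤ k ↔ x + 1 ≤ 2 ^ k := by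
  rw [lg, Nat.ceil_le, Real.logb_le_iff_le_rpow one_lt_two (by linarith), Real.rpow_natCast]

theorem add_one_le_two_pow_lg {x : ℝ} (hx : -1 < x) : x + 1 ≤ 2 ^ lg x :=
  (lg_le_iff hx).1 le_rfl

theorem le_lg_of_two_pow_le {x : ℝ} {k : ℕ} (h : 2 ^ k ≤ x + 1) : k ≤ lg x := by
  have hpos : 0 < x + 1 := lt_of_lt_of_le (by positivity) h
  refine Nat.cast_le.1 (le_trans ?_ (Nat.le_ceil _))
  rwa [Real.le_logb_iff_rpow_le one_lt_two hpos, Real.rpow_natCast]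

theorem natCast_pow_three_mul_lg_sq_le (n : ℕ) : (n : ℝ) ^ 3 * (lg n : ℝ) ^ 2 ≤ 2 ^ (5 * lg n) := by
  have hn : (n : ℝ) ≤ 2 ^ lg n := by
    linarith [add_one_le_two_pow_lg (x := n) (by linarith [n.cast_nonneg (α := ℝ)])]
  have hk : (lg n : ℝ) ≤ 2 ^ lg n := by exact_mod_cast (Nat.lt_two_pow_self).le
  calc (n : ℝ) ^ 3 * (lg n : ℝ) ^ 2 ≤ (2 ^ lg n) ^ 3 * (2 ^ lg n) ^ 2 := by gcongr
    _ = 2 ^ (5 * lg n) := by ring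

theorem div_one_sub_add_one_le_two_pow {ρ a β : ℝ} {j m : ℕ} (hρ : ρ < 1) (ha : a ≤ 2 ^ j)
    (hβ : β ≤ 2 ^ m) (hρ' : 1 / (1 - ρ) ≤ 2 ^ m) :
    (9 * a + β) / (1 - ρ) + 1 ≤ 2 ^ (j + 2 * m + 4) := by
  have hj : (1 : ℝ) ≤ 2 ^ j := one_le_pow₀ one_le_two
  have hm : (1 : ℝ) ≤ 2 ^ m := one_le_pow₀ one_le_two
  have hnum : 9 * a + β ≤ 10 * (2 ^ j * 2 ^ m) := by nlinarith
  have hdiv : (9 * a + β) / (1 - ρ) ≤ 10 * (2 ^ j * 2 ^ m) * 2 ^ m := by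
    rw [div_eq_mul_one_div]
    exact mul_le_mul hnum hρ' (by simp [sub_nonneg.2 hρ.le]) (by positivity)
  have hjm : (1 : ℝ) ≤ 2 ^ j * 2 ^ m * 2 ^ m :=
    one_le_mul_of_one_le_of_one_le (one_le_mul_of_one_le_of_one_le hj hm) hm
  calc (9 * a + β) / (1 - ρ) + 1 ≤ 16 * (2 ^ j * 2 ^ m * 2 ^ m) := by linarith
    _ = 2 ^ (j + 2 * m + 4) := by ring

theorem adjust_window_size_sufficient_general (ρ β : ℝ) (hρ1 : ρ < 1)
    (hβ : 0 ≤ β) :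
    ∃ N : ℕ, ∀ n : ℕ, N ≤ n →
      (9 * (n : ℝ) ^ 3 * ((lg (n : ℝ) : ℝ)) ^ 2 + β) / (1 - ρ)
          - 9 * (n : ℝ) ^ 3 *
            ((lg ((9 * (n : ℝ) ^ 3 * ((lg (n : ℝ) : ℝ)) ^ 2 + β) / (1 - ρ)) : ℝ))
        ≥ ρ * ((9 * (n : ℝ) ^ 3 * ((lg (n : ℝ) : ℝ)) ^ 2 + β) / (1 - ρ)) + β := by
  have hρ : 0 < 1 - ρ := sub_pos.2 hρ1
  obtain ⟨m, hm⟩ := pow_unbounded_of_one_lt (max (1 / (1 - ρ)) β) one_lt_two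
  refine ⟨2 ^ (2 * m + 6), fun n hn => ?_⟩
  set k := lg (n : ℝ)
  set L := (9 * (n : ℝ) ^ 3 * (k : ℝ) ^ 2 + β) / (1 - ρ)
  have hk : 2 * m + 6 ≤ k := le_lg_of_two_pow_le (by exact_mod_cast hn.trans (Nat.le_succ n))
  have hL : L + 1 ≤ 2 ^ (k ^ 2) := by
    simp only [L, mul_assoc]
    refine (div_one_sub_add_one_le_two_pow (m := m) hρ1
      (natCast_pow_three_mul_lg_sq_le n) (le_of_max_le_right hm.le)
      (le_of_max_le_left hm.le)).trans ?_
    exact pow_le_pow_right₀ one_le_two (by nlinarith)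
  have hlgL : (lg L : ℝ) ≤ (k : ℝ) ^ 2 := by
    have hL0 : 0 ≤ L := div_nonneg (by positivity) hρ.le
    exact_mod_cast (lg_le_iff (by linarith)).2 hL
  have hkey : (1 - ρ) * L = 9 * (n : ℝ) ^ 3 * (k : ℝ) ^ 2 + β := mul_div_cancel₀ _ hρ.ne'
  linarith [mul_le_mul_of_nonneg_left hlgL (by positivity : (0 : ℝ) ≤ 9 * (n : ℝ) ^ 3)]

/-- For `0 ≤ ρ < 1` and `β ≥ 0`, for all sufficiently large `n`, the window size
`L = (9n³·(lg n)² + β)/(1−ρ)` satisfies `L − 9n³·lg L ≥ ρL + β`. -/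
theorem adjust_window_size_sufficient (ρ β : ℝ) (hρ0 : 0 ≤ ρ) (hρ1 : ρ < 1)
    (hβ : 0 ≤ β) :
    ∃ N : ℕ, ∀ n : ℕ, N ≤ n →
      (9 * (n : ℝ) ^ 3 * ((lg (n : ℝ) : ℝ)) ^ 2 + β) / (1 - ρ)
          - 9 * (n : ℝ) ^ 3 *
            ((lg ((9 * (n : ℝ) ^ 3 * ((lg (n : ℝ) : ℝ)) ^ 2 + β) / (1 - ρ)) : ℝ))
        ≥ ρ * ((9 * (n : ℝ) ^ 3 * ((lg (n : ℝ) : ℝ)) ^ 2 + β) / (1 - ρ)) + β :=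
  adjust_window_size_sufficient_general ρ β hρ1 hβ
end
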